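/- For s ∈ S and x ∈ W: if sx > x then C_s C_x = C_{sx} + Σ_{y < x, sy < y} μ(y,x) C_y; if sx < x then C_s C_x = (v + v⁻¹) C_x. -/

import Mathlib

/-!
For `sx > x` let `E = C_s C_x - C_{sx} - ∑_{y < x, sy < y} μ(y,x) C_y`. It is bar-invariant and,
by `C_s H_y = H_{sy} + v^{±1} H_y` and `C_y ∈ H_y + ∑_z v ℤ[v] H_z`, all its coefficients lie in
`v ℤ[v]`: the `μ`-terms cancel exactly the constant terms of the `v⁻¹ h_{z,x}`. Since the bar
involution is unitriangular for the Bruhat order, a bar-invariant element with coefficients in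
`v ℤ[v]` is zero. Unitriangularity comes from the lifting property of the Bruhat order, which
follows from the subword property and the strong exchange condition; the latter is proved with
Tits' sign cocycle. For `sx < x`, multiply the first case for `sx` by `C_s`, use
`C_s² = (v + v⁻¹) C_s`, and induct on `ℓ(x)`.
-/

open LaurentPolynomial

/-- Membership in `v ℤ[v] ⊆ ℤ[v,v⁻¹]`. -/
def IsVPol (p : LaurentPolynomial ℤ) : Prop :=
  ∃ q : Polynomial ℤ, p = Polynomial.toLaurent q * T 1

/-- The coefficient of `v` in a Laurent polynomial. -/
def muCoeff (p : LaurentPolynomial ℤ) : ℤ := p.coeff 1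

variable {B W : Type*} [Group W] {M : CoxeterMatrix B}

/-- The Bruhat order `≤` on `W`: generated by right multiplication by reflections which
increases the length. -/
def BruhatLE (cs : CoxeterSystem M W) : W → W → Prop :=
  Relation.ReflTransGen
    (fun a b => (∃ t, cs.IsReflection t ∧ b = a * t) ∧ cs.length a < cs.length b)

/-- The strict Bruhat order on `W`. -/
def BruhatLT (cs : CoxeterSystem M W) (x y : W) : Prop :=
  BruhatLE cs x y ∧ x ≠ y

/-- The Hecke algebra of a Coxeter system, axiomatized: a `ℤ[v,v⁻¹]`-algebra with a basis
`T_x` indexed by `W` satisfying the braid and quadratic relations. -/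
structure HeckeAlg (cs : CoxeterSystem M W) (A : Type*) [Ring A]
    [Algebra (LaurentPolynomial ℤ) A] where
  Tb : Module.Basis W (LaurentPolynomial ℤ) A
  Tb_one : Tb 1 = 1
  Tb_mul : ∀ x y : W, cs.length (x * y) = cs.length x + cs.length y →
    Tb x * Tb y = Tb (x * y)
  Tb_quadratic : ∀ i : B, (Tb (cs.simple i) + 1) *
    (Tb (cs.simple i) - algebraMap (LaurentPolynomial ℤ) A (T (-2))) = 0

namespace HeckeAlg

variable {cs : CoxeterSystem M W} {A : Type*} [Ring A] [Algebra (LaurentPolynomial ℤ) A]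

/-- The standard basis element `H_x = v^{ℓ(x)} T_x`. -/
noncomputable def H (ha : HeckeAlg cs A) (x : W) : A :=
  algebraMap (LaurentPolynomial ℤ) A (T (cs.length x : ℤ)) * ha.Tb x

/-- The element `C_s = H_s + v` for a simple reflection `s`. -/
noncomputable def Cs (ha : HeckeAlg cs A) (i : B) : A :=
  ha.H (cs.simple i) + algebraMap (LaurentPolynomial ℤ) A (T 1)

/-- Data of the bar involution `d` on the Hecke algebra: a ring endomorphism with
`d(v) = v⁻¹` and `d(H_x) = (H_{x⁻¹})⁻¹`. -/
structure Bar (ha : HeckeAlg cs A) where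
  d : A →+* A
  d_scalar : ∀ n : ℤ, d (algebraMap (LaurentPolynomial ℤ) A (T n)) =
    algebraMap (LaurentPolynomial ℤ) A (T (-n))
  d_H_mul : ∀ x : W, d (ha.H x) * ha.H x⁻¹ = 1
  d_H_mul' : ∀ x : W, ha.H x⁻¹ * d (ha.H x) = 1

/-- `c` is a Kazhdan–Lusztig basis element at `x`: bar-invariant and congruent to `H_x`
modulo `∑_y v ℤ[v] H_y`. -/
def IsKL (ha : HeckeAlg cs A) (bar : ha.Bar) (x : W) (c : A) : Prop :=
  bar.d c = c ∧ ∃ f : W →₀ LaurentPolynomial ℤ, (∀ y, IsVPol (f y)) ∧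
    c = ha.H x + f.sum fun y r => r • ha.H y

end HeckeAlg

open scoped Classical
open HeckeAlg

namespace LaurentPolynomial

lemma coeff_T_mul (n m : ℤ) (p : LaurentPolynomial ℤ) :
    (T n * p).coeff m = p.coeff (m - n) := by
  rw [T, AddMonoidAlgebra.coeff_single_mul_apply, one_mul, neg_add_eq_sub]

/-- `v ℤ[v]`, as the Laurent polynomials supported in positive degrees. -/
def vPos : AddSubgroup (LaurentPolynomial ℤ) where
  carrier := {p | ∀ n ≤ 0, p.coeff n = 0}
  zero_mem' _ _ := rfl
  add_mem' hp hq n hn := by simp [hp n hn, hq n hn]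
  neg_mem' hp n hn := by simp [hp n hn]

lemma mem_vPos_of_isVPol {p : LaurentPolynomial ℤ} (hp : IsVPol p) : p ∈ vPos := by
  obtain ⟨q, rfl⟩ := hp
  intro n hn
  rw [← T_mul, coeff_T_mul, coeff_toLaurent, Finsupp.mapDomain_of_notMem_range]
  rintro ⟨m, hm⟩
  simp only [Nat.castEmbedding_apply] at hm
  omega

lemma T_mem_vPos {n : ℤ} (hn : 0 < n) : T n ∈ vPos := fun m hm => by
  rw [T_apply, if_neg (by omega)]

lemma T_mul_mem_vPos {n : ℤ} (hn : 0 ≤ n) {p : LaurentPolynomial ℤ} (hp : p ∈ vPos) :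
    T n * p ∈ vPos := fun m hm => by
  rw [coeff_T_mul, hp _ (by omega)]

lemma T_neg_one_mul_sub_muCoeff_mem_vPos {p : LaurentPolynomial ℤ} (hp : p ∈ vPos) :
    T (-1) * p - muCoeff p • 1 ∈ vPos := fun n hn => by
  have h1 : (1 : LaurentPolynomial ℤ) = T 0 := T_zero.symm
  rw [AddMonoidAlgebra.coeff_sub, Finsupp.sub_apply, coeff_T_mul,
    AddMonoidAlgebra.coeff_smul_apply, h1, T_apply, sub_neg_eq_add]
  rcases hn.lt_or_eq with hn | rfl
  · rw [hp (n + 1) (by omega), if_neg hn.ne', smul_zero, sub_zero]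
  · simp [muCoeff]

lemma muCoeff_zero : muCoeff 0 = 0 := rfl

lemma eq_zero_of_mem_vPos_of_invert_eq {p : LaurentPolynomial ℤ} (hp : p ∈ vPos)
    (h : invert p = p) : p = 0 := by
  ext n
  rcases le_or_gt n 0 with hn | hn
  · exact hp n hn
  · rw [← h, invert_apply, hp (-n) (by omega)]
    rfl

end LaurentPolynomial

lemma mul_mul_inv_eq_iff {G : Type*} [Group G] (g t u : G) :
    g * t * g⁻¹ = u ↔ t = g⁻¹ * u * g := by
  constructor <;> rintro rfl <;> group

lemma inv_mul_pow_inv_mul_mul {G : Type*} [Group G] {a q : G} (h : a * q = q⁻¹ * a) (n : ℕ) :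
    q⁻¹ * ((q ^ n)⁻¹ * a) * q = (q ^ (n + 2))⁻¹ * a := by
  rw [mul_assoc, mul_assoc, h]
  group

namespace CoxeterSystem

variable (cs : CoxeterSystem M W)

local prefix:100 "s" => cs.simple
local prefix:100 "π" => cs.wordProd
local prefix:100 "ℓ" => cs.length
local prefix:100 "ris" => cs.rightInvSeq

/-- Tits' sign action of a simple reflection on pairs `(t, ε)` of a reflection and a sign. -/
noncomputable def signAct (i : B) : Function.End (W × ℤˣ) :=
  fun p => (s i * p.1 * s i, (if p.1 = s i then -1 else 1) * p.2)

lemma simple_mul_simple_mul_simple_eq (i j : B) : s j * (s i * s j) = (s i * s j)⁻¹ * s j := by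
  rw [mul_inv_rev, cs.inv_simple, cs.inv_simple, mul_assoc]

-- Written as the first two factors of the product in `signAct_mul_signAct_pow_apply`.
lemma signAct_mul_signAct_apply (i j : B) (p : W × ℤˣ) :
    (cs.signAct i * cs.signAct j) p = (s i * s j * p.1 * (s i * s j)⁻¹,
      (if p.1 = ((s i * s j) ^ 1)⁻¹ * s j then -1 else 1) *
        ((if p.1 = ((s i * s j) ^ 0)⁻¹ * s j then -1 else 1) * p.2)) := by
  have hconj : s j * p.1 * s j = s i ↔ p.1 = ((s i * s j) ^ 1)⁻¹ * s j := by
    nth_rewrite 2 [← cs.inv_simple j]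
    rw [mul_mul_inv_eq_iff, pow_one, mul_inv_rev, cs.inv_simple, cs.inv_simple]
  change (s i * (s j * p.1 * s j) * s i,
    (if s j * p.1 * s j = s i then -1 else 1) * ((if p.1 = s j then -1 else 1) * p.2)) = _
  rw [hconj, pow_zero, inv_one, one_mul, mul_inv_rev, cs.inv_simple, cs.inv_simple]
  simp only [mul_assoc]

lemma signAct_mul_signAct_pow_apply (i j : B) (m : ℕ) (p : W × ℤˣ) :
    ((cs.signAct i * cs.signAct j) ^ m) p =
      ((s i * s j) ^ m * p.1 * ((s i * s j) ^ m)⁻¹,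
        (∏ n ∈ Finset.range (2 * m),
          if p.1 = ((s i * s j) ^ n)⁻¹ * s j then (-1 : ℤˣ) else 1) * p.2) := by
  induction m generalizing p with
  | zero => simp [Function.End.one_def]
  | succ m ih =>
    have hcond (n : ℕ) : s i * s j * p.1 * (s i * s j)⁻¹ = ((s i * s j) ^ n)⁻¹ * s j ↔
        p.1 = ((s i * s j) ^ (n + 2))⁻¹ * s j := by
      rw [mul_mul_inv_eq_iff,
        inv_mul_pow_inv_mul_mul (cs.simple_mul_simple_mul_simple_eq i j)]
    rw [pow_succ]
    change ((cs.signAct i * cs.signAct j) ^ m) ((cs.signAct i * cs.signAct j) p) = _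
    rw [signAct_mul_signAct_apply, ih]
    simp only [hcond, Prod.mk.injEq]
    constructor
    · generalize s i * s j = q
      group
    · rw [show 2 * (m + 1) = 2 * m + 1 + 1 by ring, Finset.prod_range_succ',
        Finset.prod_range_succ']
      simp only [mul_assoc]

lemma isLiftable_signAct : M.IsLiftable cs.signAct := by
  intro i j
  funext p
  have hq : (s i * s j) ^ M i j = 1 := cs.simple_mul_simple_pow i j
  have hsq : (∏ n ∈ Finset.range (2 * M i j),
      if p.1 = ((s i * s j) ^ n)⁻¹ * s j then (-1 : ℤˣ) else 1) = 1 := by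
    rw [two_mul, Finset.prod_range_add]
    simp only [pow_add, hq, one_mul, ← sq, Int.units_sq]
  rw [signAct_mul_signAct_pow_apply, hq, hsq]
  simp [Function.End.one_def]

noncomputable def signHom : W →* Function.End (W × ℤˣ) :=
  cs.lift ⟨cs.signAct, cs.isLiftable_signAct⟩

lemma signHom_mul_apply (v w : W) (p : W × ℤˣ) :
    cs.signHom (v * w) p = cs.signHom v (cs.signHom w p) := by
  rw [map_mul]
  rfl

lemma signHom_wordProd_apply (ω : List B) (p : W × ℤˣ) :
    cs.signHom (π ω) p = (π ω * p.1 * (π ω)⁻¹, (-1) ^ (ris ω).count p.1 * p.2) := by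
  induction ω generalizing p with
  | nil => simp [Function.End.one_def]
  | cons i ω ih =>
    have hcond : π ω * p.1 * (π ω)⁻¹ = s i ↔ (π ω)⁻¹ * s i * π ω = p.1 := by
      rw [mul_mul_inv_eq_iff, eq_comm]
    rw [cs.wordProd_cons, signHom_mul_apply, ih, signHom, lift_apply_simple, rightInvSeq]
    refine Prod.ext ?_ ?_
    · simp only [signAct, mul_inv_rev, cs.inv_simple, mul_assoc]
    · by_cases h : (π ω)⁻¹ * s i * π ω = p.1
      · simp [signAct, hcond, h, pow_succ]
      · simp [signAct, hcond, h]

noncomputable def reflCocycle (w t : W) : ℤˣ := (cs.signHom w (t, 1)).2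

lemma signHom_apply (w t : W) (ε : ℤˣ) :
    cs.signHom w (t, ε) = (w * t * w⁻¹, cs.reflCocycle w t * ε) := by
  obtain ⟨ω, -, rfl⟩ := cs.exists_isReduced w
  simp [reflCocycle, signHom_wordProd_apply]

lemma reflCocycle_wordProd (ω : List B) (t : W) :
    cs.reflCocycle (π ω) t = (-1) ^ (ris ω).count t := by
  simp [reflCocycle, signHom_wordProd_apply]

lemma reflCocycle_mul (v w t : W) :
    cs.reflCocycle (v * w) t = cs.reflCocycle v (w * t * w⁻¹) * cs.reflCocycle w t := by
  rw [reflCocycle, signHom_mul_apply, signHom_apply, signHom_apply, mul_one]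

lemma reflCocycle_one (t : W) : cs.reflCocycle 1 t = 1 := by
  simp [reflCocycle, Function.End.one_def]

lemma reflCocycle_self {t : W} (ht : cs.IsReflection t) : cs.reflCocycle t t = -1 := by
  obtain ⟨u, i, rfl⟩ := ht
  have hsimple : cs.reflCocycle (s i) (s i) = -1 := by
    simpa using cs.reflCocycle_wordProd [i] (s i)
  have hcancel : cs.reflCocycle u (s i) * cs.reflCocycle u⁻¹ (u * s i * u⁻¹) = 1 := by
    rw [← cs.reflCocycle_one (u * s i * u⁻¹), ← mul_inv_cancel u, reflCocycle_mul]
    congr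
    group
  calc cs.reflCocycle (u * s i * u⁻¹) (u * s i * u⁻¹)
      = cs.reflCocycle (u * s i) (s i) * cs.reflCocycle u⁻¹ (u * s i * u⁻¹) := by
        rw [reflCocycle_mul]
        congr
        group
    _ = cs.reflCocycle u (s i) * cs.reflCocycle (s i) (s i) *
          cs.reflCocycle u⁻¹ (u * s i * u⁻¹) := by
        rw [reflCocycle_mul]
        congr
        group
    _ = -1 := by rw [hsimple, mul_neg_one, neg_mul, hcancel]

lemma reflCocycle_mul_reflection (w : W) {t : W} (ht : cs.IsReflection t) :
    cs.reflCocycle (w * t) t = -cs.reflCocycle w t := by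
  rw [reflCocycle_mul, cs.reflCocycle_self ht, mul_inv_cancel_right, mul_neg_one]

lemma reflCocycle_eq_one_of_length_lt {w t : W} (hl : ℓ w < ℓ (w * t)) :
    cs.reflCocycle w t = 1 := by
  obtain ⟨ω, hω, rfl⟩ := cs.exists_isReduced w
  rw [reflCocycle_wordProd, List.count_eq_zero_of_not_mem, pow_zero]
  exact fun ht => (cs.isRightInversion_of_mem_rightInvSeq hω ht).2.not_gt hl

lemma reflCocycle_eq_neg_one_of_length_mul_lt {w t : W} (ht : cs.IsReflection t)
    (hl : ℓ (w * t) < ℓ w) : cs.reflCocycle w t = -1 := by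
  have hwt : w * t * t = w := by rw [mul_assoc, ht.mul_self, mul_one]
  rw [← hwt, reflCocycle_mul_reflection _ _ ht,
    cs.reflCocycle_eq_one_of_length_lt (by rwa [hwt])]

/-- The strong exchange condition. -/
theorem exists_eraseIdx_of_length_mul_lt {w t : W} (ht : cs.IsReflection t)
    (hl : ℓ (w * t) < ℓ w) {ω : List B} (hω : π ω = w) :
    ∃ j < ω.length, w * t = π (ω.eraseIdx j) := by
  have hmem : t ∈ ris ω := by
    by_contra hmem
    have hsign := cs.reflCocycle_eq_neg_one_of_length_mul_lt ht hl
    rw [← hω, reflCocycle_wordProd, List.count_eq_zero_of_not_mem hmem, pow_zero] at hsign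
    exact absurd hsign (by decide)
  obtain ⟨j, hj, rfl⟩ := List.mem_iff_getElem.mp hmem
  rw [length_rightInvSeq] at hj
  refine ⟨j, hj, ?_⟩
  rw [← hω, ← cs.wordProd_mul_getD_rightInvSeq, List.getD_eq_getElem]

end CoxeterSystem

section Bruhat

variable {cs : CoxeterSystem M W}

local prefix:100 "s" => cs.simple
local prefix:100 "π" => cs.wordProd
local prefix:100 "ℓ" => cs.length

lemma bruhatLE_refl (x : W) : BruhatLE cs x x := Relation.ReflTransGen.refl

lemma BruhatLE.trans {x y z : W} (h₁ : BruhatLE cs x y) (h₂ : BruhatLE cs y z) :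
    BruhatLE cs x z :=
  Relation.ReflTransGen.trans h₁ h₂

lemma bruhatLE_mul_reflection {x t : W} (ht : cs.IsReflection t) (hl : ℓ x < ℓ (x * t)) :
    BruhatLE cs x (x * t) :=
  Relation.ReflTransGen.single ⟨⟨t, ht, rfl⟩, hl⟩

lemma bruhatLE_simple_mul {x : W} {i : B} (hl : ℓ x < ℓ (s i * x)) :
    BruhatLE cs x (s i * x) := by
  have hx : s i * x = x * (x⁻¹ * s i * x) := by group
  rw [hx] at hl ⊢
  exact bruhatLE_mul_reflection (by simpa using (cs.isReflection_simple i).conj x⁻¹) hl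

lemma BruhatLE.length_le {x y : W} (h : BruhatLE cs x y) : ℓ x ≤ ℓ y := by
  induction h with
  | refl => rfl
  | tail _ hstep ih => exact ih.trans hstep.2.le

lemma BruhatLT.length_lt {x y : W} (h : BruhatLT cs x y) : ℓ x < ℓ y := by
  obtain ⟨hle, hne⟩ := h
  rcases Relation.ReflTransGen.cases_head hle with rfl | ⟨_, hstep, hle'⟩
  · exact absurd rfl hne
  · exact hstep.2.trans_le (BruhatLE.length_le hle')

lemma BruhatLE.bruhatLT_of_length_lt {x y : W} (h : BruhatLE cs x y) (hl : ℓ x < ℓ y) :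
    BruhatLT cs x y :=
  ⟨h, by rintro rfl; exact hl.false⟩

lemma BruhatLT.trans {x y z : W} (h₁ : BruhatLT cs x y) (h₂ : BruhatLT cs y z) :
    BruhatLT cs x z :=
  (h₁.1.trans h₂.1).bruhatLT_of_length_lt (h₁.length_lt.trans h₂.length_lt)

lemma bruhatLT_simple_mul {x : W} {i : B} (hl : ℓ x < ℓ (s i * x)) : BruhatLT cs x (s i * x) :=
  (bruhatLE_simple_mul hl).bruhatLT_of_length_lt hl

variable (cs) in
def SubwordProperty (n : ℕ) : Prop :=
  ∀ ω : List B, cs.IsReduced ω → ω.length ≤ n → ∀ δ : List B, δ.Sublist ω →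
    BruhatLE cs (π δ) (π ω)

lemma CoxeterSystem.IsReduced.of_cons {i : B} {ω : List B} (h : cs.IsReduced (i :: ω)) :
    cs.IsReduced ω := by
  simpa using h.drop 1

lemma bruhatLE_simple_mul_wordProd_of_isReduced_cons {i : B} {ω : List B}
    (h : cs.IsReduced (i :: ω)) : BruhatLE cs (π ω) (s i * π ω) := by
  apply bruhatLE_simple_mul
  rw [← cs.wordProd_cons, h, h.of_cons, List.length_cons]
  omega

lemma simple_mul_bruhatLE_or_of_length_mul_lt {n : ℕ} (hn : SubwordProperty cs n) {b t : W}
    (ht : cs.IsReflection t) (hlt : ℓ b < ℓ (b * t)) (hbt : ℓ (b * t) ≤ n + 1) (i : B) :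
    BruhatLE cs (s i * b) (b * t) ∨ BruhatLE cs (s i * b) (s i * (b * t)) := by
  rcases cs.length_simple_mul b i with hb | hb
  · rcases cs.length_simple_mul (b * t) i with hbt' | hbt'
    · right
      rw [← mul_assoc]
      exact bruhatLE_mul_reflection ht (by rw [mul_assoc]; omega)
    · obtain ⟨γ, hγ, hγw⟩ := cs.exists_isReduced (s i * (b * t))
      have hπ : π (i :: γ) = b * t := by
        rw [cs.wordProd_cons, ← hγw, cs.simple_mul_simple_cancel_left]
      have hred : cs.IsReduced (i :: γ) := by
        rw [CoxeterSystem.IsReduced, hπ, List.length_cons, ← hγ.eq, ← hγw]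
        omega
      obtain ⟨j, hj, hje⟩ := cs.exists_eraseIdx_of_length_mul_lt ht
        (by rwa [mul_assoc, ht.mul_self, mul_one]) hπ
      rw [mul_assoc, ht.mul_self, mul_one] at hje
      rcases j with _ | k
      · left
        have hsb : s i * b = b * t := by
          rw [← hπ, cs.wordProd_cons, hje, List.eraseIdx_cons_zero]
        rw [hsb]
        exact bruhatLE_refl _
      · right
        have hsb : s i * b = π (γ.eraseIdx k) := by
          rw [hje, List.eraseIdx_cons_succ, cs.wordProd_cons, cs.simple_mul_simple_cancel_left]
        rw [hsb, hγw]
        refine hn γ hγ ?_ _ (List.eraseIdx_sublist γ k)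
        rw [← hγ.eq, ← hγw]
        omega
  · left
    have hsb : BruhatLE cs (s i * b) b := by
      conv_rhs => rw [← cs.simple_mul_simple_cancel_left (w := b) i]
      exact bruhatLE_simple_mul (by rw [cs.simple_mul_simple_cancel_left]; omega)
    exact hsb.trans (bruhatLE_mul_reflection ht hlt)

lemma simple_mul_bruhatLE_or {n : ℕ} (hn : SubwordProperty cs n) {u w : W}
    (h : BruhatLE cs u w) (hw : ℓ w ≤ n + 1) (i : B) :
    BruhatLE cs (s i * u) w ∨ BruhatLE cs (s i * u) (s i * w) := by
  induction h with
  | refl => exact Or.inr (bruhatLE_refl _)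
  | @tail b _ _ hstep ih =>
    obtain ⟨⟨t, ht, rfl⟩, hlt⟩ := hstep
    have hbt := bruhatLE_mul_reflection ht hlt
    rcases ih (hlt.le.trans hw) with hu | hu
    · exact Or.inl (hu.trans hbt)
    · exact (simple_mul_bruhatLE_or_of_length_mul_lt hn ht hlt hw i).imp hu.trans hu.trans

lemma SubwordProperty.succ {n : ℕ} (hn : SubwordProperty cs n) :
    SubwordProperty cs (n + 1) := by
  intro ω hω hlen δ hδ
  cases hδ with
  | slnil => exact bruhatLE_refl _
  | @cons δ γ i hsub =>
    have hγ := hω.of_cons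
    rw [cs.wordProd_cons]
    exact (hn γ hγ (by simpa using hlen) δ hsub).trans
      (bruhatLE_simple_mul_wordProd_of_isReduced_cons hω)
  | @cons_cons δ γ i hsub =>
    have hγ := hω.of_cons
    have hγn : γ.length ≤ n := by simpa using hlen
    rw [cs.wordProd_cons, cs.wordProd_cons]
    rcases simple_mul_bruhatLE_or hn (hn γ hγ hγn δ hsub) (by rw [hγ]; omega) i with h | h
    · exact h.trans (bruhatLE_simple_mul_wordProd_of_isReduced_cons hω)
    · exact h

lemma subwordProperty (n : ℕ) : SubwordProperty cs n := by
  induction n with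
  | zero =>
    intro ω _ hlen δ hδ
    obtain rfl := List.length_eq_zero_iff.mp (Nat.le_zero.mp hlen)
    obtain rfl := List.sublist_nil.mp hδ
    exact bruhatLE_refl _
  | succ n ih => exact ih.succ

/-- The lifting property of the Bruhat order. -/
lemma BruhatLE.simple_mul {u w : W} (h : BruhatLE cs u w) {i : B} (hw : ℓ w < ℓ (s i * w)) :
    BruhatLE cs (s i * u) (s i * w) :=
  (simple_mul_bruhatLE_or (subwordProperty (ℓ w)) h (Nat.le_succ _) i).elim
    (fun h' => h'.trans (bruhatLE_simple_mul hw)) id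

lemma BruhatLT.simple_mul {u w : W} (h : BruhatLT cs u w) {i : B} (hw : ℓ w < ℓ (s i * w)) :
    BruhatLT cs (s i * u) (s i * w) := by
  refine (h.1.simple_mul hw).bruhatLT_of_length_lt ?_
  have := h.length_lt
  rcases cs.length_simple_mul u i with hu | hu <;>
    rcases cs.length_simple_mul w i with hw' | hw' <;> omega

end Bruhat

namespace HeckeAlg

variable {cs : CoxeterSystem M W} {A : Type*} [Ring A] [Algebra (LaurentPolynomial ℤ) A]
  (ha : HeckeAlg cs A)

local prefix:100 "s" => cs.simple
local prefix:100 "ℓ" => cs.length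
local notation "φ" => algebraMap (LaurentPolynomial ℤ) A

lemma algebraMap_T_mul_algebraMap_T (m n : ℤ) : φ (T m) * φ (T n) = φ (T (m + n)) := by
  rw [← map_mul, T_add]

noncomputable def basisH : Module.Basis W (LaurentPolynomial ℤ) A :=
  ha.Tb.isUnitSMul fun x => isUnit_T (ℓ x : ℤ)

lemma basisH_apply (x : W) : ha.basisH x = ha.H x := by
  rw [basisH, Module.Basis.isUnitSMul_apply, Algebra.smul_def, H]

lemma repr_H (y : W) : ha.basisH.repr (ha.H y) = Finsupp.single y 1 := by
  rw [← basisH_apply, Module.Basis.repr_self]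

lemma H_one : ha.H 1 = 1 := by
  simp [H, ha.Tb_one]

lemma H_mul {x y : W} (hxy : ℓ (x * y) = ℓ x + ℓ y) : ha.H x * ha.H y = ha.H (x * y) := by
  rw [H, H, H, mul_assoc, ← mul_assoc (ha.Tb x), ← Algebra.commutes, mul_assoc,
    ha.Tb_mul x y hxy, ← mul_assoc, algebraMap_T_mul_algebraMap_T, hxy, Nat.cast_add]

lemma H_simple (i : B) : ha.H (s i) = φ (T 1) * ha.Tb (s i) := by
  rw [H, cs.length_simple, Nat.cast_one]

lemma Cs_mul_H_simple_sub (i : B) : ha.Cs i * (ha.H (s i) - φ (T (-1))) = 0 := by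
  have hCs : ha.Cs i = φ (T 1) * (ha.Tb (s i) + 1) := by rw [Cs, H_simple, mul_add, mul_one]
  have hHs : ha.H (s i) - φ (T (-1)) = φ (T 1) * (ha.Tb (s i) - φ (T (-2))) := by
    rw [H_simple, mul_sub, algebraMap_T_mul_algebraMap_T]
    norm_num
  rw [hCs, hHs, mul_assoc, ← mul_assoc _ (φ (T 1)), ← Algebra.commutes, mul_assoc,
    ha.Tb_quadratic, mul_zero, mul_zero]

lemma H_simple_mul_self (i : B) :
    ha.H (s i) * ha.H (s i) = 1 + (φ (T (-1)) - φ (T 1)) * ha.H (s i) := by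
  have hcomm : ha.H (s i) * φ (T (-1)) = φ (T (-1)) * ha.H (s i) := (Algebra.commutes _ _).symm
  have hunit : φ (T 1) * φ (T (-1)) = 1 := by
    rw [algebraMap_T_mul_algebraMap_T, add_neg_cancel, T_zero, map_one]
  rw [← sub_eq_zero, ← ha.Cs_mul_H_simple_sub i, Cs]
  simp only [add_mul, mul_sub, sub_mul, hcomm, hunit]
  abel

lemma H_simple_mul_of_length_lt {i : B} {y : W} (hl : ℓ y < ℓ (s i * y)) :
    ha.H (s i) * ha.H y = ha.H (s i * y) := by
  apply H_mul
  rcases cs.length_simple_mul y i with h | h <;> rw [cs.length_simple] <;> omega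

lemma H_simple_mul_of_length_simple_mul_lt {i : B} {y : W} (hl : ℓ (s i * y) < ℓ y) :
    ha.H (s i) * ha.H y = ha.H (s i * y) + (φ (T (-1)) - φ (T 1)) * ha.H y := by
  have hy : ha.H (s i) * ha.H (s i * y) = ha.H y := by
    rw [H_simple_mul_of_length_lt ha (by rwa [cs.simple_mul_simple_cancel_left]),
      cs.simple_mul_simple_cancel_left]
  rw [← hy, ← mul_assoc, H_simple_mul_self, add_mul, one_mul, mul_assoc]

lemma Cs_mul_H (i : B) (y : W) :
    ha.Cs i * ha.H y =
      ha.H (s i * y) + φ (if ℓ y < ℓ (s i * y) then T 1 else T (-1)) * ha.H y := by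
  rw [Cs, add_mul]
  rcases (cs.length_simple_mul_ne y i).lt_or_gt with hlt | hgt
  · rw [if_neg hlt.not_gt, H_simple_mul_of_length_simple_mul_lt ha hlt, add_assoc, ← add_mul,
      sub_add_cancel]
  · rw [if_pos hgt, H_simple_mul_of_length_lt ha hgt]

lemma Cs_mul_self (i : B) : ha.Cs i * ha.Cs i = φ (T 1 + T (-1)) * ha.Cs i := by
  have hCs : ha.Cs i = (ha.H (s i) - φ (T (-1))) + φ (T 1 + T (-1)) := by
    rw [Cs, map_add]
    abel
  nth_rewrite 2 [hCs]
  rw [mul_add, Cs_mul_H_simple_sub, zero_add, Algebra.commutes]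

noncomputable def lowerSpan (x : W) : Submodule (LaurentPolynomial ℤ) A :=
  Submodule.span (LaurentPolynomial ℤ) (ha.basisH '' {z | BruhatLT cs z x})

lemma H_mem_lowerSpan {z x : W} (h : BruhatLT cs z x) : ha.H z ∈ ha.lowerSpan x :=
  Submodule.subset_span ⟨z, h, ha.basisH_apply z⟩

lemma lowerSpan_mono {x y : W} (h : BruhatLT cs x y) : ha.lowerSpan x ≤ ha.lowerSpan y :=
  Submodule.span_mono (Set.image_mono fun _ hz => BruhatLT.trans hz h)

lemma algebraMap_mul_mem {p : Submodule (LaurentPolynomial ℤ) A} (r : LaurentPolynomial ℤ)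
    {a : A} (h : a ∈ p) : φ r * a ∈ p := by
  rw [← Algebra.smul_def]
  exact p.smul_mem r h

lemma H_simple_mul_mem_lowerSpan {x : W} {i : B} (hx : ℓ x < ℓ (s i * x)) {m : A}
    (hm : m ∈ ha.lowerSpan x) : ha.H (s i) * m ∈ ha.lowerSpan (s i * x) := by
  induction hm using Submodule.span_induction with
  | mem _ hz =>
    obtain ⟨z, hz, rfl⟩ := hz
    have hsz := ha.H_mem_lowerSpan (BruhatLT.simple_mul hz hx)
    rw [basisH_apply]
    rcases (cs.length_simple_mul_ne z i).lt_or_gt with hlt | hgt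
    · rw [H_simple_mul_of_length_simple_mul_lt ha hlt, ← map_sub]
      exact add_mem hsz (algebraMap_mul_mem _
        (ha.H_mem_lowerSpan (BruhatLT.trans hz (bruhatLT_simple_mul hx))))
    · rwa [H_simple_mul_of_length_lt ha hgt]
  | zero => rw [mul_zero]; exact zero_mem _
  | add a b _ _ hma hmb => rw [mul_add]; exact add_mem hma hmb
  | smul r a _ hma => rw [mul_smul_comm]; exact Submodule.smul_mem _ r hma

namespace Bar

variable {ha} (bar : ha.Bar)

lemma map_algebraMap (r : LaurentPolynomial ℤ) : bar.d (φ r) = φ (invert r) := by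
  induction r using LaurentPolynomial.induction_on' with
  | add p q hp hq => rw [map_add, map_add, map_add, hp, hq, map_add]
  | C_mul_T n a =>
    rw [eq_intCast C a, map_mul, map_mul, map_mul, map_intCast, map_intCast, map_intCast,
      bar.d_scalar, invert_T, map_mul, map_intCast]

lemma map_smul_eq_invert_smul (r : LaurentPolynomial ℤ) (a : A) :
    bar.d (r • a) = invert r • bar.d a := by
  rw [Algebra.smul_def, Algebra.smul_def, map_mul, map_algebraMap]

lemma map_H_simple (i : B) :
    bar.d (ha.H (s i)) = ha.H (s i) + (φ (T 1) - φ (T (-1))) := by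
  have hinv : (ha.H (s i) + (φ (T 1) - φ (T (-1)))) * ha.H (s i) = 1 := by
    simp only [add_mul, sub_mul, H_simple_mul_self]
    abel
  have hd : ha.H (s i) * bar.d (ha.H (s i)) = 1 := by
    simpa [cs.inv_simple] using bar.d_H_mul' (s i)
  rw [← one_mul (bar.d _), ← hinv, mul_assoc, hd, mul_one]

lemma map_Cs (i : B) : bar.d (ha.Cs i) = ha.Cs i := by
  rw [Cs, map_add, map_H_simple, bar.d_scalar]
  abel

lemma map_H_sub_mem_lowerSpan (x : W) : bar.d (ha.H x) - ha.H x ∈ ha.lowerSpan x := by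
  induction hn : ℓ x using Nat.strong_induction_on generalizing x with
  | _ n ih =>
  by_cases hx : x = 1
  · rw [hx, H_one, map_one, sub_self]
    exact zero_mem _
  obtain ⟨i, hi⟩ := cs.exists_leftDescent_of_ne_one hx
  set x' := s i * x
  have hx' : s i * x' = x := cs.simple_mul_simple_cancel_left i
  have hlt : ℓ x' < ℓ (s i * x') := by rwa [hx']
  have hm := ih _ (hn ▸ hi) x' rfl
  have hH : ha.H (s i) * ha.H x' = ha.H x := by rw [H_simple_mul_of_length_lt ha hlt, hx']
  have hexpand : bar.d (ha.H x) - ha.H x = ha.H (s i) * (bar.d (ha.H x') - ha.H x') +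
      (φ (T 1 - T (-1)) * ha.H x' + φ (T 1 - T (-1)) * (bar.d (ha.H x') - ha.H x')) := by
    rw [← hH, map_mul, map_H_simple, map_sub]
    noncomm_ring
  have hsub := ha.lowerSpan_mono (bruhatLT_simple_mul hlt)
  rw [hexpand, ← hx']
  exact add_mem (ha.H_simple_mul_mem_lowerSpan hlt hm) (add_mem
    (algebraMap_mul_mem _ (ha.H_mem_lowerSpan (bruhatLT_simple_mul hlt)))
    (algebraMap_mul_mem _ (hsub hm)))

lemma repr_map_H_apply {y z : W} (h : ¬ BruhatLT cs z y) :
    ha.basisH.repr (bar.d (ha.H y)) z = Finsupp.single y 1 z := by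
  have hz : ha.basisH.repr (bar.d (ha.H y) - ha.H y) z = 0 := by
    rw [← Finsupp.notMem_support_iff]
    exact fun hz => h (ha.basisH.repr_support_subset_of_mem_span _
      (bar.map_H_sub_mem_lowerSpan y) hz)
  rwa [map_sub, Finsupp.sub_apply, repr_H, sub_eq_zero] at hz

lemma repr_map_apply {e : A} {z : W}
    (hz : ∀ y ∈ (ha.basisH.repr e).support, ¬ BruhatLT cs z y) :
    ha.basisH.repr (bar.d e) z = invert (ha.basisH.repr e z) := by
  set g := ha.basisH.repr e
  have he : e = ∑ y ∈ g.support, g y • ha.H y := by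
    conv_lhs => rw [← ha.basisH.linearCombination_repr e]
    simp [Finsupp.linearCombination_apply, Finsupp.sum, basisH_apply, g]
  have hterm : ∀ y ∈ g.support, ha.basisH.repr (bar.d (g y • ha.H y)) z =
      if y = z then invert (g y) else 0 := by
    intro y hy
    rw [map_smul_eq_invert_smul, LinearEquiv.map_smul, Finsupp.smul_apply,
      repr_map_H_apply bar (hz y hy),
      Finsupp.single_apply, smul_eq_mul]
    split_ifs <;> simp
  rw [he, map_sum, map_sum, Finsupp.finsetSum_apply, Finset.sum_congr rfl hterm,
    Finset.sum_ite_eq']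
  split_ifs with hzs
  · rfl
  · rw [Finsupp.notMem_support_iff.mp hzs, map_zero]

lemma exists_invert_repr_eq {e : A} (hbar : bar.d e = e) {S : Finset W} (hS : S.Nonempty)
    (hup : ∀ y ∈ (ha.basisH.repr e).support, ∀ z ∈ S, BruhatLT cs z y → y ∈ S) :
    ∃ y ∈ S, invert (ha.basisH.repr e y) = ha.basisH.repr e y := by
  obtain ⟨y₀, hy₀, hmax⟩ := S.exists_max_image cs.length hS
  refine ⟨y₀, hy₀, ?_⟩
  rw [← repr_map_apply bar, hbar]
  exact fun y hy hlt => (hmax y (hup y hy y₀ hy₀ hlt)).not_gt hlt.length_lt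

lemma eq_zero_of_map_eq {e : A} (hbar : bar.d e = e)
    (hv : ∀ z, ha.basisH.repr e z ∈ vPos) : e = 0 := by
  by_contra he
  obtain ⟨y, hy, hinv⟩ := bar.exists_invert_repr_eq hbar
    (Finsupp.support_nonempty_iff.mpr (by simpa using he)) fun y hy _ _ _ => hy
  exact Finsupp.mem_support_iff.mp hy (eq_zero_of_mem_vPos_of_invert_eq (hv y) hinv)

end Bar

lemma repr_finsuppSum_smul_H (f : W →₀ LaurentPolynomial ℤ) :
    ha.basisH.repr (f.sum fun y r => r • ha.H y) = f := by
  simp [map_finsuppSum, repr_H, Finsupp.smul_single]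

namespace IsKL

variable {ha} {bar : ha.Bar} {x : W} {c : A}

lemma exists_repr_eq (hc : ha.IsKL bar x c) :
    ∃ f : W →₀ LaurentPolynomial ℤ, (∀ y, f y ∈ vPos) ∧
      ha.basisH.repr c = Finsupp.single x 1 + f := by
  obtain ⟨-, f, hf, rfl⟩ := hc
  exact ⟨f, fun y => mem_vPos_of_isVPol (hf y), by
    rw [map_add, repr_finsuppSum_smul_H, repr_H]⟩

lemma repr_mem_vPos (hc : ha.IsKL bar x c) {y : W} (hy : y ≠ x) :
    ha.basisH.repr c y ∈ vPos := by
  obtain ⟨f, hf, hcf⟩ := hc.exists_repr_eq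
  rw [hcf, Finsupp.add_apply, Finsupp.single_eq_of_ne hy, zero_add]
  exact hf y

lemma repr_eq_zero_of_not_bruhatLE (hc : ha.IsKL bar x c) {y : W} (hy : ¬ BruhatLE cs y x) :
    ha.basisH.repr c y = 0 := by
  by_contra hne
  set S := (ha.basisH.repr c).support.filter fun z => ¬ BruhatLE cs z x
  have hS : S.Nonempty := ⟨y, Finset.mem_filter.mpr ⟨Finsupp.mem_support_iff.mpr hne, hy⟩⟩
  have hup : ∀ w ∈ (ha.basisH.repr c).support, ∀ z ∈ S, BruhatLT cs z w → w ∈ S :=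
    fun w hw z hz hzw =>
      Finset.mem_filter.mpr ⟨hw, fun hwx => (Finset.mem_filter.mp hz).2 (hzw.1.trans hwx)⟩
  obtain ⟨z, hz, hinv⟩ := bar.exists_invert_repr_eq hc.1 hS hup
  obtain ⟨hzs, hzx⟩ := Finset.mem_filter.mp hz
  have hzx' : z ≠ x := by rintro rfl; exact hzx (bruhatLE_refl z)
  exact Finsupp.mem_support_iff.mp hzs
    (eq_zero_of_mem_vPos_of_invert_eq (hc.repr_mem_vPos hzx') hinv)

lemma repr_self (hc : ha.IsKL bar x c) : ha.basisH.repr c x = 1 := by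
  obtain ⟨f, hf, hcf⟩ := hc.exists_repr_eq
  have hinv := bar.repr_map_apply (e := c) (z := x) fun y hy hxy =>
    Finsupp.mem_support_iff.mp hy (hc.repr_eq_zero_of_not_bruhatLE
      fun hyx => hxy.length_lt.not_ge hyx.length_le)
  rw [hc.1, hcf, Finsupp.add_apply, Finsupp.single_eq_same, map_add, map_one] at hinv
  rw [hcf, Finsupp.add_apply, Finsupp.single_eq_same,
    eq_zero_of_mem_vPos_of_invert_eq (hf x) (add_left_cancel hinv.symm), add_zero]

end IsKL

lemma repr_Cs_mul_apply (i : B) (c : A) (z : W) :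
    ha.basisH.repr (ha.Cs i * c) z = ha.basisH.repr c (s i * z) +
      (if ℓ z < ℓ (s i * z) then T 1 else T (-1)) * ha.basisH.repr c z := by
  let R := LaurentPolynomial ℤ
  let L₁ : A →ₗ[R] R :=
    Finsupp.lapply z ∘ₗ ha.basisH.repr.toLinearMap ∘ₗ LinearMap.mulLeft R (ha.Cs i)
  let L₂ : A →ₗ[R] R := Finsupp.lapply (s i * z) ∘ₗ ha.basisH.repr.toLinearMap +
    (if ℓ z < ℓ (s i * z) then (T 1 : R) else T (-1)) •
      (Finsupp.lapply z ∘ₗ ha.basisH.repr.toLinearMap)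
  suffices L₁ = L₂ from LinearMap.congr_fun this c
  refine ha.basisH.ext fun y => ?_
  have hsy : s i * y = z ↔ y = s i * z := by
    constructor <;> rintro rfl <;> rw [cs.simple_mul_simple_cancel_left]
  simp only [L₁, L₂, LinearMap.add_apply, LinearMap.smul_apply, LinearMap.comp_apply,
    LinearMap.mulLeft_apply, LinearEquiv.coe_coe, Finsupp.lapply_apply, basisH_apply, Cs_mul_H,
    map_add, ← Algebra.smul_def, map_smul, repr_H, Finsupp.single_apply, hsy, smul_eq_mul]
  by_cases hyz : y = z
  · subst hyz
    rfl
  · simp [hyz]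

section KazhdanLusztig

variable {ha} {bar : ha.Bar} {C : W → A} {h : W → W →₀ LaurentPolynomial ℤ}
  (hC : ∀ x, ha.IsKL bar x (C x)) (hh : ∀ x, C x = (h x).sum fun y r => r • ha.H y)

include hh in
lemma repr_C (x : W) : ha.basisH.repr (C x) = h x := by
  rw [hh, repr_finsuppSum_smul_H]

include hC hh

lemma coeff_C_self (x : W) : h x x = 1 := by
  rw [← repr_C hh, (hC x).repr_self]

lemma coeff_C_mem_vPos {x y : W} (hy : y ≠ x) : h x y ∈ vPos := by
  rw [← repr_C hh]
  exact (hC x).repr_mem_vPos hy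

lemma coeff_C_eq_zero_of_not_bruhatLE {x y : W} (hy : ¬ BruhatLE cs y x) : h x y = 0 := by
  rw [← repr_C hh]
  exact (hC x).repr_eq_zero_of_not_bruhatLE hy

lemma sum_coeff_C_sub_mem_vPos (P : W → Prop) [DecidablePred P] (x z : W) :
    (∑ y ∈ (h x).support, if P y then muCoeff (h x y) • h y z else 0) -
      (if P z then muCoeff (h x z) • 1 else 0) ∈ vPos := by
  have hterm : ∀ y ∈ (h x).support.erase z,
      (if P y then muCoeff (h x y) • h y z else 0) ∈ vPos := fun y hy => by
    split_ifs
    · exact zsmul_mem (coeff_C_mem_vPos hC hh (Finset.ne_of_mem_erase hy).symm) _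
    · exact zero_mem _
  by_cases hz : z ∈ (h x).support
  · rw [← Finset.add_sum_erase _ _ hz, coeff_C_self hC hh, add_sub_cancel_left]
    exact sum_mem hterm
  · rw [Finsupp.notMem_support_iff.mp hz, muCoeff_zero, zero_smul, ite_self, sub_zero,
      ← Finset.erase_eq_of_notMem hz]
    exact sum_mem hterm

lemma coeff_Cs_mul_C_sub_mem_vPos {i : B} {x : W} (hx : ℓ x < ℓ (s i * x)) (z : W) :
    h x (s i * z) + (if ℓ z < ℓ (s i * z) then T 1 else T (-1)) * h x z - h (s i * x) z -
      (if BruhatLT cs z x ∧ ℓ (s i * z) < ℓ z then muCoeff (h x z) • 1 else 0) ∈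
      vPos := by
  by_cases hz : z = s i * x
  · have hsx : ¬ BruhatLE cs (s i * x) x := fun hle => hle.length_le.not_gt hx
    rw [hz, cs.simple_mul_simple_cancel_left, coeff_C_self hC hh, coeff_C_self hC hh,
      coeff_C_eq_zero_of_not_bruhatLE hC hh hsx, if_neg hx.not_gt, if_neg fun h => hsx h.1.1]
    simp
  have hsz : h x (s i * z) ∈ vPos := coeff_C_mem_vPos hC hh fun he => hz (by
    rw [← he, cs.simple_mul_simple_cancel_left])
  have hsxz : h (s i * x) z ∈ vPos := coeff_C_mem_vPos hC hh hz
  rcases (cs.length_simple_mul_ne z i).lt_or_gt with hlt | hgt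
  · have hzx : z ≠ x := by rintro rfl; exact hlt.not_gt hx
    have hxz : T (-1) * h x z -
        (if BruhatLT cs z x ∧ ℓ (s i * z) < ℓ z then muCoeff (h x z) • 1 else 0) ∈
        vPos := by
      by_cases hzx' : BruhatLT cs z x
      · rw [if_pos ⟨hzx', hlt⟩]
        exact T_neg_one_mul_sub_muCoeff_mem_vPos (coeff_C_mem_vPos hC hh hzx)
      · rw [if_neg fun h => hzx' h.1,
          coeff_C_eq_zero_of_not_bruhatLE hC hh fun hle => hzx' ⟨hle, hzx⟩]
        simp
    rw [if_neg hlt.not_gt]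
    convert sub_mem (add_mem hsz hxz) hsxz using 1
    abel
  · have hxz : T 1 * h x z ∈ vPos := by
      by_cases hzx : z = x
      · rw [hzx, coeff_C_self hC hh, mul_one]
        exact T_mem_vPos one_pos
      · exact T_mul_mem_vPos zero_le_one (coeff_C_mem_vPos hC hh hzx)
    rw [if_pos hgt, if_neg fun h => h.2.not_gt hgt, sub_zero]
    exact sub_mem (add_mem hsz hxz) hsxz

theorem Cs_mul_C_of_length_lt {i : B} {x : W} (hx : ℓ x < ℓ (s i * x)) :
    ha.Cs i * C x = C (s i * x) + ∑ y ∈ (h x).support,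
      if BruhatLT cs y x ∧ ℓ (s i * y) < ℓ y then muCoeff (h x y) • C y else 0 := by
  rw [← sub_eq_iff_eq_add', ← sub_eq_zero]
  apply bar.eq_zero_of_map_eq
  · simp only [map_sub, map_mul, map_sum, Bar.map_Cs, (hC _).1, apply_ite bar.d, map_zsmul,
      map_zero]
  · intro z
    have hcorr : ha.basisH.repr (∑ y ∈ (h x).support,
        if BruhatLT cs y x ∧ ℓ (s i * y) < ℓ y then muCoeff (h x y) • C y else 0) z =
        ∑ y ∈ (h x).support,
          if BruhatLT cs y x ∧ ℓ (s i * y) < ℓ y then muCoeff (h x y) • h y z else 0 := by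
      simp only [map_sum, Finsupp.finsetSum_apply, apply_ite ha.basisH.repr, map_zsmul,
        apply_ite (fun f : W →₀ LaurentPolynomial ℤ => f z), Finsupp.smul_apply, repr_C hh,
        map_zero, Finsupp.zero_apply]
    rw [map_sub, map_sub, Finsupp.sub_apply, Finsupp.sub_apply, repr_Cs_mul_apply, hcorr,
      repr_C hh, repr_C hh]
    simpa only [sub_sub_sub_cancel_right] using
      sub_mem (coeff_Cs_mul_C_sub_mem_vPos hC hh hx z)
        (sum_coeff_C_sub_mem_vPos hC hh (fun y => BruhatLT cs y x ∧ ℓ (s i * y) < ℓ y) x z)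

theorem Cs_mul_C_of_length_simple_mul_lt {i : B} {x : W} (hx : ℓ (s i * x) < ℓ x) :
    ha.Cs i * C x = φ (T 1 + T (-1)) * C x := by
  induction hn : ℓ x using Nat.strong_induction_on generalizing x with
  | _ n ih =>
  set x' := s i * x
  have hx' : s i * x' = x := cs.simple_mul_simple_cancel_left i
  have hC' := Cs_mul_C_of_length_lt hC hh (x := x') (by rwa [hx'])
  rw [hx'] at hC'
  set corr := ∑ y ∈ (h x').support,
    if BruhatLT cs y x' ∧ ℓ (s i * y) < ℓ y then muCoeff (h x' y) • C y else 0
  have hcorr : ha.Cs i * corr = φ (T 1 + T (-1)) * corr := by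
    simp only [corr, Finset.mul_sum]
    refine Finset.sum_congr rfl fun y _ => ?_
    split_ifs with hy
    · rw [mul_smul_comm, mul_smul_comm, ih _ (hn ▸ hy.1.length_lt.trans hx) hy.2 rfl]
    · rw [mul_zero, mul_zero]
  calc ha.Cs i * C x = ha.Cs i * (ha.Cs i * C x') - ha.Cs i * corr := by
        rw [hC', mul_add, add_sub_cancel_right]
    _ = φ (T 1 + T (-1)) * (C x + corr) - φ (T 1 + T (-1)) * corr := by
        rw [← mul_assoc, Cs_mul_self, mul_assoc, hC', hcorr]
    _ = φ (T 1 + T (-1)) * C x := by rw [mul_add, add_sub_cancel_right]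

end KazhdanLusztig

end HeckeAlg

/-- `C_s C_x = C_{sx} + ∑_{y < x, sy < y} μ(y,x) C_y` if `sx > x`, and
`C_s C_x = (v + v⁻¹) C_x` if `sx < x`. -/
theorem stmt8 {B W : Type*} [Group W] {M : CoxeterMatrix B} (cs : CoxeterSystem M W)
    (A : Type*) [Ring A] [Algebra (LaurentPolynomial ℤ) A] (ha : HeckeAlg cs A)
    (bar : ha.Bar) (C : W → A) (hC : ∀ x, ha.IsKL bar x (C x))
    (h : W → W →₀ LaurentPolynomial ℤ)
    (hh : ∀ x, C x = (h x).sum fun y r => r • ha.H y)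
    (i : B) (x : W) :
    (cs.length (cs.simple i * x) > cs.length x →
      ha.Cs i * C x = C (cs.simple i * x) +
        ∑ y ∈ (h x).support,
          if BruhatLT cs y x ∧ cs.length (cs.simple i * y) < cs.length y then
            muCoeff (h x y) • C y
          else 0) ∧
    (cs.length (cs.simple i * x) < cs.length x →
      ha.Cs i * C x = algebraMap (LaurentPolynomial ℤ) A (T 1 + T (-1)) * C x) :=
  ⟨HeckeAlg.Cs_mul_C_of_length_lt hC hh, HeckeAlg.Cs_mul_C_of_length_simple_mul_lt hC hh⟩
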